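/- arXiv:2407.18599 — 3 statements merged into one kernel-verified Lean document; each statement's English description precedes it below -/
import Mathlib

section
/- Let Σ be a finite alphabet with |Σ| = σ ≥ 2, let k be a natural number, and let w be a word over Σ with alph(w) = Σ and k > ι(w) such that for every word w' over Σ with ι(w') = ι(w) we have |ScatFact_k(w)| ≥ |ScatFact_k(w')|. Then for every i ∈ [ι(w)], the inner of the i-th arch, inner_i(w), is (k − ι(w))-universal over the alphabet Σ \ {m(w)[i]}. -/
open List

universe u
variable {α : Type u}

/-- `ScatFact k w` is the set of scattered factors (subsequences) of `w` of length exactly `k`. -/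
def ScatFact (k : ℕ) (w : List α) : Set (List α) :=
  {v | v.length = k ∧ v.Sublist w}

/-- `w` is `k`-universal over the alphabet `S`: every word of length `k` over `S`
is a scattered factor of `w`. -/
def IsKUniversal [DecidableEq α] (S : Finset α) (k : ℕ) (w : List α) : Prop :=
  ∀ v : List α, v.length = k → (∀ x ∈ v, x ∈ S) → v.Sublist w

/-- The universality index of `w` over the alphabet `S`: the largest `k` such that
`w` is `k`-universal over `S`. -/
noncomputable def univIdx [DecidableEq α] (S : Finset α) (w : List α) : ℕ :=
  sSup {k | IsKUniversal S k w}

/-- `IsArchFact S w inners modus rest` says that `w` has the arch factorization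
`w = ar_1 ⋯ ar_n · rest` over the alphabet `S`, where the `i`-th arch is
`ar_i = inners[i] ++ [modus[i]]`: each arch contains every letter of `S`,
the last letter of each arch occurs only once within the arch, and the
alphabet of the rest is a proper subset of `S`. -/
def IsArchFact [DecidableEq α] (S : Finset α) (w : List α)
    (inners : List (List α)) (modus : List α) (rest : List α) : Prop :=
  inners.length = modus.length ∧
  w = (List.zipWith (fun inn m => inn ++ [m]) inners modus).flatten ++ rest ∧
  (∀ p ∈ List.zip inners modus, ∀ x ∈ S, x ∈ p.1 ++ [p.2]) ∧
  (∀ p ∈ List.zip inners modus, p.2 ∉ p.1) ∧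
  rest.toFinset ⊂ S

/-- `v` is perfect `k`-universal over `S`: `alph(v) = S`, the universality index of `v`
over `S` is `k`, and the rest of its arch factorization over `S` is empty. -/
def IsPerfectUniv [DecidableEq α] (S : Finset α) (k : ℕ) (v : List α) : Prop :=
  v.toFinset = S ∧ univIdx S v = k ∧ ∃ inners modus, IsArchFact S v inners modus []

/-- `v` is minimal perfect `k`-universal over `S`. -/
def IsMinPerfectUniv [DecidableEq α] (S : Finset α) (k : ℕ) (v : List α) : Prop :=
  IsPerfectUniv S k v ∧ ∀ v' : List α, IsPerfectUniv S k v' → v.length ≤ v'.length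

/-- `nextAlphPos w i s` (positions `1`-indexed): the least position `j` such that
`w[i+1..j]` contains exactly `s` distinct letters, or `none` (representing `-1`)
if `w[i+1..|w|]` contains fewer than `s` distinct letters. -/
noncomputable def nextAlphPos [DecidableEq α] (w : List α) (i s : ℕ) : Option ℕ :=
  if (w.drop i).toFinset.card < s then none
  else some (sInf {j | ((w.drop i).take (j - i)).toFinset.card = s})

/-- The letter of `w` at (1-indexed) position `j`. -/
def letterAt [Inhabited α] (w : List α) (j : ℕ) : α := w.getD (j - 1) default

/-- The word over `Fin σ` with `ι` arches, whose first arch is `a_1 a_2 ⋯ a_σ`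
and each later arch is the reverse of the previous one. -/
def wmin (σ ι : ℕ) : List (Fin σ) :=
  ((List.range ι).map (fun i =>
    if i % 2 = 0 then List.finRange σ else (List.finRange σ).reverse)).flatten

/-!
Suppose the inner `A` of an arch with modus letter `m` misses a word `t` over `Σ \ {m}` of length
`k - ι(w)`. Pick `z` of length one more than the number of later arches that is not a scattered
factor of the part `W` of `w` after this arch, e.g. their modus letters followed by a letter
absent from the rest. Since every shorter word embeds into `W`, some `y` avoiding `m` gives
`t z ≤ t y m W`, so inserting `t y` just before `m` keeps the shape of the arch factorization,
hence keeps `ι`. The new word contains `w`, and also the word formed by the modus letters of the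
earlier arches followed by `t z`, which `w` does not: those modus letters pin the embedding to
the arch, `t` cannot fit into `A`, and `m ∉ t`, so `z` would have to embed into `W`. Thus the
new word has strictly more scattered factors of length `k`, against the maximality of `w`.
-/

namespace List

theorem sublist_of_cons_sublist_append_cons {a : α} {X s Y : List α} (ha : a ∉ X)
    (h : a :: s <+ X ++ a :: Y) : s <+ Y := by
  obtain ⟨s₁, s₂, hs, hs₁, hs₂⟩ := sublist_append_iff.mp h
  cases s₁ with
  | nil =>
    rw [nil_append] at hs
    exact cons_sublist_cons.mp (hs ▸ hs₂)
  | cons b s₁ =>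
    obtain ⟨rfl, -⟩ := cons_eq_cons.mp hs
    exact absurd (hs₁.subset mem_cons_self) ha

theorem exists_mem_cons_sublist_of_append_sublist_append {t z X Y : List α}
    (htX : ¬ t <+ X) (h : t ++ z <+ X ++ Y) : ∃ a ∈ t, a :: z <+ Y := by
  obtain ⟨s₁, s₂, hs, hs₁, hs₂⟩ := sublist_append_iff.mp h
  rcases append_eq_append_iff.mp hs with ⟨r, rfl, -⟩ | ⟨r, rfl, rfl⟩
  · exact absurd ((sublist_append_left t r).trans hs₁) htX
  · cases r with
    | nil => exact absurd (by simpa using hs₁) htX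
    | cons a r => exact ⟨a, by simp, (sublist_append_right r z).cons_cons a |>.trans hs₂⟩

theorem exists_notMem_sublist_append_cons (m : α) (z W : List α)
    (hW : ∀ ζ : List α, ζ.length < z.length → ζ <+ W) :
    ∃ y, m ∉ y ∧ z <+ y ++ m :: W := by
  induction z with
  | nil => exact ⟨[], not_mem_nil, nil_sublist _⟩
  | cons b z ih =>
    by_cases hb : b = m
    · exact ⟨[], not_mem_nil, hb ▸ (hW z (by simp)).cons_cons b⟩
    · obtain ⟨y, hmy, hzy⟩ := ih fun ζ hζ => hW ζ (by simp; omega)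
      exact ⟨b :: y, by simp [Ne.symm hb, hmy], hzy.cons_cons b⟩

end List

def archWord (ps : List (List α × α)) : List α :=
  (ps.map fun p => p.1 ++ [p.2]).flatten

@[simp]
theorem archWord_nil : archWord ([] : List (List α × α)) = [] := rfl

@[simp]
theorem archWord_cons (p : List α × α) (ps : List (List α × α)) :
    archWord (p :: ps) = p.1 ++ p.2 :: archWord ps := by
  simp [archWord]

@[simp]
theorem archWord_append (ps qs : List (List α × α)) :
    archWord (ps ++ qs) = archWord ps ++ archWord qs := by
  simp [archWord]

theorem flatten_zipWith_eq_archWord (I : List (List α)) (M : List α) :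
    (zipWith (fun inn m => inn ++ [m]) I M).flatten = archWord (zip I M) := by
  induction I generalizing M with
  | nil => rfl
  | cons A I ih => cases M <;> simp [ih]

theorem map_snd_sublist_archWord (ps : List (List α × α)) : ps.map Prod.snd <+ archWord ps := by
  induction ps with
  | nil => exact nil_sublist _
  | cons p ps ih => simpa using (ih.cons_cons p.2).trans (sublist_append_right p.1 _)

theorem sublist_archWord_of_length_le {ps : List (List α × α)} {s : List α}
    (hs : ∀ p ∈ ps, ∀ x ∈ s, x ∈ p.1 ++ [p.2]) (hlen : s.length ≤ ps.length) :
    s <+ archWord ps := by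
  induction ps generalizing s with
  | nil => simp_all
  | cons p ps ih =>
    cases s with
    | nil => exact nil_sublist _
    | cons a s =>
      have ha : [a] <+ p.1 ++ [p.2] := singleton_sublist.mpr (hs p mem_cons_self a mem_cons_self)
      have hs' := ih (fun q hq x hx => hs q (mem_cons_of_mem p hq) x (mem_cons_of_mem a hx))
        (by simpa using hlen)
      simpa using ha.append hs'

theorem sublist_of_map_snd_append_sublist {ps : List (List α × α)}
    (hps : ∀ p ∈ ps, p.2 ∉ p.1) {s X : List α}
    (h : ps.map Prod.snd ++ s <+ archWord ps ++ X) : s <+ X := by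
  induction ps with
  | nil => simpa using h
  | cons p ps ih =>
    refine ih (fun q hq => hps q (mem_cons_of_mem p hq)) (sublist_of_cons_sublist_append_cons
      (hps p mem_cons_self) ?_)
    simpa using h

theorem map_snd_append_singleton_not_sublist {ps : List (List α × α)}
    (hps : ∀ p ∈ ps, p.2 ∉ p.1) {c : α} {R : List α} (hc : c ∉ R) :
    ¬ ps.map Prod.snd ++ [c] <+ archWord ps ++ R :=
  fun h => hc (singleton_sublist.mp (sublist_of_map_snd_append_sublist hps h))

theorem ScatFact.mono {k : ℕ} {w w' : List α} (h : w <+ w') : ScatFact k w ⊆ ScatFact k w' :=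
  fun _ hv => ⟨hv.1, hv.2.trans h⟩

theorem ScatFact.finite (k : ℕ) (w : List α) : (ScatFact k w).Finite :=
  w.sublists.finite_toSet.subset fun _ hv => mem_sublists.mpr hv.2

section Universality

variable [DecidableEq α]

theorem IsKUniversal.of_le {S : Finset α} {c : α} (hc : c ∈ S) {i j : ℕ} {w : List α}
    (h : IsKUniversal S j w) (hij : i ≤ j) : IsKUniversal S i w := by
  intro v hv hvS
  refine (sublist_append_left v (replicate (j - i) c)).trans (h _ (by simp; omega) ?_)
  simpa [or_imp, forall_and, hc] using hvS

theorem univIdx_eq_of_isKUniversal_iff {S : Finset α} {w : List α} {n : ℕ}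
    (h : ∀ j, IsKUniversal S j w ↔ j ≤ n) : univIdx S w = n := by
  rw [univIdx, show {k | IsKUniversal S k w} = Set.Iic n from Set.ext h, csSup_Iic]

variable [Fintype α]

theorem univIdx_archWord_append {ps : List (List α × α)} {R : List α}
    (hS : ∀ p ∈ ps, ∀ x ∈ (Finset.univ : Finset α), x ∈ p.1 ++ [p.2])
    (hps : ∀ p ∈ ps, p.2 ∉ p.1) (hR : R.toFinset ⊂ Finset.univ) :
    univIdx Finset.univ (archWord ps ++ R) = ps.length := by
  obtain ⟨c, -, hc⟩ := Finset.exists_of_ssubset hR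
  have hnot : ¬ IsKUniversal Finset.univ (ps.length + 1) (archWord ps ++ R) := fun h =>
    map_snd_append_singleton_not_sublist hps (mt mem_toFinset.mpr hc)
      (h _ (by simp) fun x _ => Finset.mem_univ x)
  refine univIdx_eq_of_isKUniversal_iff fun j => ⟨fun h => ?_, fun hj v hv _ => ?_⟩
  · by_contra! hj
    exact hnot (h.of_le (Finset.mem_univ c) hj)
  · exact (sublist_archWord_of_length_le (fun p hp x _ => hS p hp x (Finset.mem_univ x))
      (hv ▸ hj)).trans (sublist_append_left _ R)

end Universality

theorem scatFact_archWord_ssubset_of_insert {ps : List (List α × α)}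
    (hps : ∀ p ∈ ps, p.2 ∉ p.1) {A t u z W : List α} {m : α} {k : ℕ}
    (hk : ps.length + t.length + z.length = k)
    (hmt : m ∉ t) (htA : ¬ t <+ A) (hzW : ¬ z <+ W) (htz : t ++ z <+ u ++ m :: W) :
    ScatFact k (archWord ps ++ (A ++ m :: W)) ⊂
      ScatFact k (archWord ps ++ (A ++ u ++ m :: W)) := by
  have hsub : archWord ps ++ (A ++ m :: W) <+ archWord ps ++ (A ++ u ++ m :: W) := by
    simpa only [append_assoc] using
      ((sublist_append_right u (m :: W)).append_left A).append_left (archWord ps)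
  refine (Set.ssubset_iff_of_subset (ScatFact.mono hsub)).mpr
    ⟨ps.map Prod.snd ++ (t ++ z), ⟨by simp; omega, ?_⟩, ?_⟩
  · exact (map_snd_sublist_archWord ps).append
      (by simpa using htz.trans (sublist_append_right A _))
  · rintro ⟨-, hv⟩
    obtain ⟨a, hat, haz⟩ := exists_mem_cons_sublist_of_append_sublist_append htA
      (sublist_of_map_snd_append_sublist hps hv)
    have ham : a ≠ m := fun h => hmt (h ▸ hat)
    exact hzW ((sublist_cons_self a z).trans (haz.of_cons_of_ne ham))

theorem exists_not_sublist_archWord_append {ps : List (List α × α)}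
    (hS : ∀ p ∈ ps, ∀ x, x ∈ p.1 ++ [p.2]) (hps : ∀ p ∈ ps, p.2 ∉ p.1)
    {c : α} {R : List α} (hc : c ∉ R) (m : α) :
    ∃ z y, z.length = ps.length + 1 ∧ ¬ z <+ archWord ps ++ R ∧
      m ∉ y ∧ z <+ y ++ m :: (archWord ps ++ R) := by
  obtain ⟨y, hmy, hzy⟩ := exists_notMem_sublist_append_cons m (ps.map Prod.snd ++ [c])
    (archWord ps ++ R) fun ζ hζ => (sublist_archWord_of_length_le (fun p hp x _ => hS p hp x)
      (by simpa using hζ)).trans (sublist_append_left _ R)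
  exact ⟨_, y, by simp, map_snd_append_singleton_not_sublist hps hc, hmy, hzy⟩

theorem stmt4_general {α : Type u} [Fintype α] [DecidableEq α]
    (k : ℕ) (w : List α)
    (hk : univIdx Finset.univ w < k)
    (hmax : ∀ w' : List α, univIdx Finset.univ w' = univIdx Finset.univ w →
        (ScatFact k w').ncard ≤ (ScatFact k w).ncard)
    (inners : List (List α)) (modus : List α) (rest : List α)
    (hfact : IsArchFact Finset.univ w inners modus rest) :
    ∀ p ∈ List.zip inners modus,
      IsKUniversal (Finset.univ \ {p.2}) (k - univIdx Finset.univ w) p.1 := by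
  obtain ⟨-, rfl, hS, hps, hR⟩ := hfact
  rw [flatten_zipWith_eq_archWord] at hk hmax ⊢
  generalize zip inners modus = ps at hk hmax hS hps ⊢
  rw [univIdx_archWord_append hS hps hR] at hk hmax ⊢
  rintro ⟨A, m⟩ hp t htlen htm
  by_contra htA
  have hmt : m ∉ t := fun h => by simpa using htm m h
  obtain ⟨ps₁, ps₂, rfl⟩ := append_of_mem hp
  simp only [forall_mem_append, forall_mem_cons] at hS hps
  obtain ⟨c, -, hc⟩ := Finset.exists_of_ssubset hR
  obtain ⟨z, y, hzlen, hzW, hmy, hzy⟩ := exists_not_sublist_archWord_append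
    (fun p hp x => hS.2.2 p hp x (Finset.mem_univ x)) hps.2.2 (mt mem_toFinset.mpr hc) m
  have hι' : univIdx Finset.univ (archWord (ps₁ ++ (A ++ (t ++ y), m) :: ps₂) ++ rest) =
      (ps₁ ++ (A, m) :: ps₂).length := by
    refine (univIdx_archWord_append ?_ ?_ hR).trans (by simp) <;>
      simp only [forall_mem_append, forall_mem_cons]
    · exact ⟨hS.1, fun x hx => ((sublist_append_left A _).append_right [m]).subset (hS.2.1 x hx),
        hS.2.2⟩
    · exact ⟨hps.1, by simp [hps.2.1, hmt, hmy], hps.2.2⟩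
  have hss := scatFact_archWord_ssubset_of_insert hps.1 (k := k) (u := t ++ y)
    (by simp at htlen hk; omega) hmt htA hzW (by simpa using hzy.append_left t)
  simp only [archWord_append, archWord_cons, append_assoc] at hss hι' hmax
  exact (Set.ncard_lt_ncard hss (ScatFact.finite _ _)).not_ge (hmax _ hι')

theorem stmt4 {α : Type u} [Fintype α] [DecidableEq α]
    (hsigma : 2 ≤ Fintype.card α) (k : ℕ) (w : List α) (halph : ∀ a : α, a ∈ w)
    (hk : univIdx Finset.univ w < k)
    (hmax : ∀ w' : List α, univIdx Finset.univ w' = univIdx Finset.univ w →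
        (ScatFact k w').ncard ≤ (ScatFact k w).ncard)
    (inners : List (List α)) (modus : List α) (rest : List α)
    (hfact : IsArchFact Finset.univ w inners modus rest) :
    ∀ p ∈ List.zip inners modus,
      IsKUniversal (Finset.univ \ {p.2}) (k - univIdx Finset.univ w) p.1 :=
  stmt4_general k w hk hmax inners modus rest hfact
end

section
/- Let Σ be a finite alphabet with |Σ| = σ ≥ 2 and let k, ι be natural numbers with k > ι. Then there exists a word w over Σ with alph(w) = Σ, ι(w) = ι, and |w| = (σ − 1)·(k − ι)·(ι + 1) + ι, such that for every word w' over Σ with ι(w') = ι we have |ScatFact_k(w')| ≤ |ScatFact_k(w)|. -/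
open List

universe u
variable {α : Type u}

/-!
Fix a letter `x`, put `c = k - ι`, and let `B` spell every other letter `c` times. The word
`W = B x B x ⋯ x B` with `ι` separators `x` has universality index `ι` (it has only `ι`
letters `x`), and it contains every word of length `k` with at most `ι` letters `x`.
If `ι(w') = ι`, some word `z` of length `ι + 1` is not a scattered factor of `w'`. A word `v` of
length `k` missing from `W` has more than `ι` letters `x`; writing `z` onto its occurrences of
`x`, and swapping `x` with the awaited letter of `z` everywhere else so that the map stays
injective, sends it to a word of length `k` missing from `w'`. Hence at least as many words of
length `k` are missing from `w'` as from `W`.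
-/

section Sublists

theorem sublist_flatten_replicate {P : List α} :
    ∀ {u : List α} {n : ℕ}, (∀ y ∈ u, y ∈ P) → u.length ≤ n →
      u <+ (replicate n P).flatten
  | [], _, _, _ => nil_sublist _
  | _ :: _, 0, _, hn => by simp at hn
  | a :: u, n + 1, hu, hn => by
    rw [replicate_succ, flatten_cons]
    exact (singleton_sublist.2 (hu a mem_cons_self)).append
      (sublist_flatten_replicate (fun y hy => hu y (mem_cons_of_mem a hy)) (by simpa using hn))

def sepJoin (x : α) (B : List α) : ℕ → List α
  | 0 => B
  | t + 1 => B ++ x :: sepJoin x B t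

variable {x : α} {B : List α}

theorem prefix_sepJoin (t : ℕ) : B <+: sepJoin x B t := by
  cases t with
  | zero => exact prefix_refl B
  | succ t => exact prefix_append B _

theorem mem_sepJoin_self (t : ℕ) : x ∈ sepJoin x B (t + 1) := by
  simp [sepJoin]

theorem length_sepJoin (t : ℕ) :
    (sepJoin x B t).length = t * (B.length + 1) + B.length := by
  induction t with
  | zero => simp [sepJoin]
  | succ t ih =>
    rw [sepJoin, length_append, length_cons, ih]
    ring

variable [DecidableEq α]

theorem count_sepJoin (hx : x ∉ B) (t : ℕ) : (sepJoin x B t).count x = t := by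
  induction t with
  | zero => exact count_eq_zero.2 hx
  | succ t ih => simp [sepJoin, count_append, count_eq_zero.2 hx, ih]

/-- An `x` among the first `c` letters of `v` is matched with the first separator; if there is
none, those `c` letters go into the first block `B`. -/
theorem sublist_sepJoin {c : ℕ} (hc : 1 ≤ c)
    (hB : ∀ u : List α, x ∉ u → u.length ≤ c → u <+ B) :
    ∀ {t : ℕ} {v : List α}, v.count x ≤ t → v.length ≤ c + t → v <+ sepJoin x B t := by
  intro t
  induction t with
  | zero =>
    intro v hcount hlen
    exact hB v (count_eq_zero.1 (Nat.le_zero.1 hcount)) hlen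
  | succ t ih =>
    intro v hcount hlen
    have hshort : ∀ r : List α, r.length ≤ t + 1 → r <+ x :: sepJoin x B t := by
      rintro (_ | ⟨y, u⟩) hr
      · exact nil_sublist _
      rw [length_cons] at hr
      have hu : u.count x ≤ t := count_le_length.trans (by omega)
      by_cases hy : y = x
      · subst hy
        exact (ih hu (by omega)).cons_cons y
      · exact (ih (by rwa [count_cons_of_ne hy]) (by rw [length_cons]; omega)).cons x
    rw [sepJoin]
    by_cases hx : x ∈ v.take c
    · obtain ⟨s, r, hxs, hsr, -⟩ := exists_erase_eq hx
      have hs : s.length < c := by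
        have := congrArg length hsr
        have := length_take_le c v
        simp only [length_append, length_cons] at *
        omega
      have hv : v = s ++ x :: (r ++ v.drop c) := by
        conv_lhs => rw [← take_append_drop c v, hsr]
        simp
      generalize r ++ v.drop c = u at hv
      subst hv
      simp only [count_append, count_cons_self, count_eq_zero.2 hxs, length_append,
        length_cons] at hcount hlen
      exact (hB s hxs hs.le).append ((ih (by omega) (by omega)).cons_cons x)
    · rw [← take_append_drop c v]
      exact (hB _ hx (length_take_le c v)).append (hshort _ (by rw [length_drop]; omega))

end Sublists

section Imprint

variable [DecidableEq α]

/-- `imprint x z v` writes `z` onto the first occurrences of `x` in `v`. While a letter `b` of `z`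
is pending, every letter is passed through `Equiv.swap x b` (an `x` becomes `b`, a `b` becomes
`x`), so the pending letter can only appear at an occurrence of `x`: this makes `imprint x z`
injective. -/
def imprint (x : α) : List α → List α → List α
  | [], v => v
  | _ :: _, [] => []
  | b :: z, y :: v => Equiv.swap x b y :: imprint x (if y = x then z else b :: z) v

theorem length_imprint (x : α) : ∀ z v : List α, (imprint x z v).length = v.length
  | [], _ => by simp [imprint]
  | _ :: _, [] => by simp [imprint]
  | b :: z, y :: v => by simp [imprint, length_imprint]

theorem imprint_injective (x : α) : ∀ z : List α, Function.Injective (imprint x z)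
  | [], _, _, h => by simpa [imprint] using h
  | _ :: _, [], [], _ => rfl
  | _ :: _, [], _ :: _, h => by simp [imprint] at h
  | _ :: _, _ :: _, [], h => by simp [imprint] at h
  | b :: z, y :: v, y' :: v', h => by
    simp only [imprint, cons.injEq, Equiv.apply_eq_iff_eq] at h
    obtain ⟨rfl, h⟩ := h
    rw [imprint_injective x _ h]

theorem sublist_imprint {x : α} :
    ∀ {z v : List α}, z.length ≤ v.count x → z <+ imprint x z v
  | [], _, _ => nil_sublist _
  | _ :: _, [], h => by simp at h
  | b :: z, y :: v, h => by
    by_cases hy : y = x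
    · subst hy
      rw [count_cons_self, length_cons] at h
      simpa [imprint] using (sublist_imprint (Nat.le_of_succ_le_succ h)).cons_cons b
    · rw [count_cons_of_ne hy] at h
      simpa [imprint, hy] using (sublist_imprint h).cons (Equiv.swap x b y)

theorem ncard_scatFact_le [Finite α] {x : α} {n k : ℕ} {w w' z : List α}
    (hw : ∀ v : List α, v.length = k → v.count x ≤ n → v <+ w)
    (hz : z.length ≤ n + 1) (hzw' : ¬ z <+ w') :
    (ScatFact k w').ncard ≤ (ScatFact k w).ncard := by
  set Y := {v : List α | v.length = k}
  have hY : Y.Finite := List.finite_length_eq α k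
  have hmaps : ∀ v ∈ Y \ ScatFact k w, imprint x z v ∈ Y \ ScatFact k w' := by
    rintro v ⟨hv, hvw⟩
    have hzv : z.length ≤ v.count x := by
      by_contra h
      exact hvw ⟨hv, hw v hv (by omega)⟩
    exact ⟨(length_imprint x z v).trans hv, fun h => hzw' ((sublist_imprint hzv).trans h.2)⟩
  have hle := Set.ncard_le_ncard_of_injOn _ hmaps (imprint_injective x z).injOn hY.sdiff
  have hsplit := Set.ncard_sdiff_add_ncard_of_subset
    (show ScatFact k w ⊆ Y from fun _ hv => hv.1) hY
  have hsplit' := Set.ncard_sdiff_add_ncard_of_subset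
    (show ScatFact k w' ⊆ Y from fun _ hv => hv.1) hY
  omega

end Imprint

section Universality

variable [DecidableEq α] {S : Finset α} {w : List α}

theorem IsKUniversal.le_count {m : ℕ} {x : α} (hx : x ∈ S) (h : IsKUniversal S m w) :
    m ≤ w.count x := by
  simpa using (h (replicate m x) length_replicate
    (fun y hy => (eq_of_mem_replicate hy).symm ▸ hx)).count_le x

theorem univIdx_eq_of_isKUniversal {n : ℕ} (h : IsKUniversal S n w)
    (hmax : ∀ m, IsKUniversal S m w → m ≤ n) : univIdx S w = n :=
  IsGreatest.csSup_eq ⟨h, hmax⟩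

theorem not_isKUniversal_univIdx_succ {x : α} (hx : x ∈ S) :
    ¬ IsKUniversal S (univIdx S w + 1) w := fun h =>
  Nat.not_succ_le_self _ (le_csSup ⟨w.count x, fun _ hm => IsKUniversal.le_count hx hm⟩ h)

end Universality

noncomputable def blockAvoiding [Fintype α] [DecidableEq α] (x : α) (c : ℕ) : List α :=
  (replicate c (Finset.univ.erase x).toList).flatten

section Block

variable [Fintype α] [DecidableEq α] {x : α} {c : ℕ}

theorem not_mem_blockAvoiding : x ∉ blockAvoiding x c := by
  simp [blockAvoiding]

theorem length_blockAvoiding : (blockAvoiding x c).length = c * (Fintype.card α - 1) := by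
  simp [blockAvoiding, Finset.card_erase_of_mem]

theorem sublist_blockAvoiding {u : List α} (hu : x ∉ u) (hl : u.length ≤ c) :
    u <+ blockAvoiding x c :=
  sublist_flatten_replicate (fun y hy => by simpa using ne_of_mem_of_not_mem hy hu) hl

theorem mem_blockAvoiding {a : α} (ha : a ≠ x) (hc : c ≠ 0) : a ∈ blockAvoiding x c :=
  (sublist_blockAvoiding (u := [a]) (by simpa using ha.symm)
    (by simpa [Nat.one_le_iff_ne_zero])).subset (mem_singleton_self a)

end Block

theorem stmt6 {α : Type u} [Fintype α] [DecidableEq α]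
    (hsigma : 2 ≤ Fintype.card α) (k iota : ℕ) (hiota : 1 ≤ iota) (hk : iota < k) :
    ∃ w : List α, (∀ a : α, a ∈ w) ∧ univIdx Finset.univ w = iota ∧
      w.length = (Fintype.card α - 1) * (k - iota) * (iota + 1) + iota ∧
      ∀ w' : List α, univIdx Finset.univ w' = iota →
        (ScatFact k w').ncard ≤ (ScatFact k w).ncard := by
  obtain ⟨x⟩ : Nonempty α := Fintype.card_pos_iff.1 (by omega)
  set W := sepJoin x (blockAvoiding x (k - iota)) iota
  have hsub : ∀ v : List α, v.count x ≤ iota → v.length ≤ k → v <+ W := fun v hx hl =>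
    sublist_sepJoin (by omega) (fun _ => sublist_blockAvoiding) hx (by omega)
  have huniv : IsKUniversal Finset.univ iota W := fun v hv _ =>
    hsub v (hv ▸ count_le_length) (by omega)
  have hcount : W.count x = iota := count_sepJoin not_mem_blockAvoiding iota
  have hidx : univIdx Finset.univ W = iota := univIdx_eq_of_isKUniversal huniv fun _ hm =>
    hcount ▸ hm.le_count (Finset.mem_univ x)
  refine ⟨W, fun a => ?_, hidx, ?_, fun w' hw' => ?_⟩
  · obtain ⟨t, rfl⟩ := Nat.exists_eq_add_of_le' hiota
    rcases eq_or_ne a x with rfl | ha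
    · exact mem_sepJoin_self t
    · exact (prefix_sepJoin _).subset (mem_blockAvoiding ha (by omega))
  · rw [length_sepJoin, length_blockAvoiding]
    ring
  · obtain ⟨z, hz, hzw'⟩ : ∃ z : List α, z.length = iota + 1 ∧ ¬ z <+ w' := by
      simpa [IsKUniversal, hw'] using not_isKUniversal_univIdx_succ (Finset.mem_univ x) (w := w')
    exact ncard_scatFact_le (fun v hv hvx => hsub v hvx hv.le) hz.le hzw'
end

section
/- Let Σ be a finite alphabet with |Σ| = σ ≥ 2 and let w be a word over Σ with alph(w) = Σ and |w| = ι(w)·σ. Then for all s ∈ [σ] and all j ∈ [|w|], if nextAlphPos_w(j, s) ≠ −1 then nextAlphPos_w(j, s) ≤ ⌊j/σ⌋·σ + σ + s. -/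
open List

universe u
variable {α : Type u}

/-!
A `k`-universal word over `Σ` splits greedily into `k` arches, each containing every letter,
so it has length at least `k·σ`. When `|w| = ι(w)·σ` every arch has length exactly `σ`, so
every block `w[iσ+1..(i+1)σ]` is a permutation of `Σ`. The first such block starting after
position `j` begins at `⌊j/σ⌋·σ + σ + 1`, and its first `s` letters are distinct; if that block
does not exist, the bound already lies beyond the end of `w`.
-/

section Lists

variable {α : Type*}

theorem List.Sublist.sublist_drop_succ_of_notMem_take {a : α} {v w : List α} {n : ℕ}
    (h : a :: v <+ w) (ha : a ∉ w.take n) : v <+ w.drop (n + 1) := by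
  rw [← take_append_drop n w, sublist_append_iff] at h
  obtain ⟨l₁, l₂, hv, h₁, h₂⟩ := h
  cases l₁ with
  | nil =>
    rw [nil_append] at hv
    simpa [← hv, tail_drop] using h₂.tail
  | cons b l₁ =>
    obtain ⟨rfl, -⟩ := cons.inj (hv.trans (cons_append ..))
    exact absurd (h₁.subset mem_cons_self) ha

variable [DecidableEq α]

theorem List.card_toFinset_take_add_one_le (l : List α) (n : ℕ) :
    (l.take (n + 1)).toFinset.card ≤ (l.take n).toFinset.card + 1 := by
  rw [take_add_one, toFinset_append]
  refine (Finset.card_union_le _ _).trans (Nat.add_le_add_left ?_ _)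
  cases l[n]? <;> simp

theorem List.exists_le_card_toFinset_take_eq {l : List α} {n s : ℕ}
    (h : s ≤ (l.take n).toFinset.card) : ∃ t ≤ n, (l.take t).toFinset.card = s := by
  induction n with
  | zero => exact ⟨0, le_rfl, by simp at h ⊢; omega⟩
  | succ n ih =>
    by_cases hn : s ≤ (l.take n).toFinset.card
    · obtain ⟨t, ht, hts⟩ := ih hn
      exact ⟨t, ht.trans n.le_succ, hts⟩
    · have := l.card_toFinset_take_add_one_le n
      exact ⟨n + 1, le_rfl, by omega⟩

theorem List.card_toFinset_take_drop_le {l : List α} {i p : ℕ} (hip : i ≤ p) (s : ℕ) :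
    ((l.drop p).take s).toFinset.card ≤ ((l.drop i).take (p - i + s)).toFinset.card := by
  have hfactor : (l.drop p).take s = ((l.drop i).take (p - i + s)).drop (p - i) := by
    rw [drop_take, drop_drop, Nat.add_sub_cancel_left, Nat.add_sub_cancel' hip]
  refine Finset.card_le_card fun a ha => ?_
  rw [mem_toFinset, hfactor] at *
  exact drop_subset _ _ ha

theorem List.card_toFinset_take_of_card_toFinset_eq_length {l : List α}
    (hl : l.toFinset.card = l.length) (s : ℕ) : (l.take s).toFinset.card = min s l.length := by
  have hnodup : l.Nodup := Multiset.toFinset_card_eq_card_iff_nodup.1 hl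
  rw [toFinset_card_of_nodup ((take_sublist s l).nodup hnodup), length_take]

theorem le_card_of_nextAlphPos_eq_some {w : List α} {i s x : ℕ}
    (hx : nextAlphPos w i s = some x) : s ≤ (w.drop i).toFinset.card := by
  unfold nextAlphPos at hx
  split_ifs at hx with h
  exact not_lt.1 h

theorem nextAlphPos_le_of_le_card_toFinset_take {w : List α} {i s n x : ℕ}
    (h : s ≤ ((w.drop i).take n).toFinset.card) (hx : nextAlphPos w i s = some x) :
    x ≤ i + n := by
  unfold nextAlphPos at hx
  split_ifs at hx
  obtain ⟨t, htn, hts⟩ := exists_le_card_toFinset_take_eq h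
  rw [← Option.some_injective _ hx]
  exact (Nat.sInf_le (show i + t ∈ _ by simpa using hts)).trans (by omega)

end Lists

section Universality

variable {α : Type*} [DecidableEq α]

theorem IsKUniversal.length_le {S : Finset α} {k : ℕ} {w : List α} {a : α} (ha : a ∈ S)
    (h : IsKUniversal S k w) : k ≤ w.length := by
  simpa using (h (replicate k a) length_replicate (by simp [mem_replicate, ha])).length_le

theorem isKUniversal_univIdx {S : Finset α} (hS : S.Nonempty) (w : List α) :
    IsKUniversal S (univIdx S w) w := by
  obtain ⟨a, ha⟩ := hS
  exact Nat.sSup_mem (s := {k | IsKUniversal S k w})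
    ⟨0, fun v hv _ => by simp [length_eq_zero_iff.1 hv]⟩
    ⟨w.length, fun k (hk : IsKUniversal S k w) => hk.length_le ha⟩

variable [Fintype α]

theorem List.card_le_length_of_toFinset_eq_univ {u : List α} (hu : u.toFinset = Finset.univ) :
    Fintype.card α ≤ u.length := by
  simpa [hu] using u.toFinset_card_le

variable [Nonempty α]

theorem IsKUniversal.exists_eq_append {k : ℕ} {w : List α}
    (h : IsKUniversal Finset.univ (k + 1) w) :
    ∃ u v, w = u ++ v ∧ u.toFinset = Finset.univ ∧ IsKUniversal Finset.univ k v := by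
  have hex : ∃ p, (w.take p).toFinset = Finset.univ := ⟨w.length, by
    refine Finset.eq_univ_iff_forall.2 fun a => ?_
    simpa using (h (replicate (k + 1) a) length_replicate (by simp)).subset
      (mem_replicate.2 ⟨k.succ_ne_zero, rfl⟩)⟩
  have hp : Nat.find hex ≠ 0 := fun h0 => by
    have := Nat.find_spec hex
    rw [h0, take_zero, toFinset_nil] at this
    exact Finset.univ_nonempty.ne_empty this.symm
  -- the last letter of the shortest complete prefix occurs nowhere before it
  obtain ⟨a, ha⟩ : ∃ a, a ∉ w.take (Nat.find hex - 1) := by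
    simpa [Finset.eq_univ_iff_forall] using Nat.find_min hex (Nat.sub_one_lt hp)
  refine ⟨_, _, (take_append_drop (Nat.find hex) w).symm, Nat.find_spec hex, fun v hv _ => ?_⟩
  have := (h (a :: v) (by simp [hv]) (by simp)).sublist_drop_succ_of_notMem_take ha
  rwa [Nat.sub_one_add_one hp] at this

theorem IsKUniversal.mul_card_le_length {k : ℕ} {w : List α}
    (h : IsKUniversal Finset.univ k w) : k * Fintype.card α ≤ w.length := by
  induction k generalizing w with
  | zero => simp
  | succ k ih =>
    obtain ⟨u, v, rfl, hu, hv⟩ := h.exists_eq_append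
    have hσ := card_le_length_of_toFinset_eq_univ hu
    rw [length_append, Nat.succ_mul]
    have := ih hv
    omega

theorem IsKUniversal.toFinset_take_drop_mul_card_eq_univ {k : ℕ} {w : List α}
    (h : IsKUniversal Finset.univ k w) (hlen : w.length = k * Fintype.card α)
    {i : ℕ} (hi : i < k) :
    ((w.drop (i * Fintype.card α)).take (Fintype.card α)).toFinset = Finset.univ := by
  induction k generalizing w i with
  | zero => omega
  | succ k ih =>
    obtain ⟨u, v, rfl, hu, hv⟩ := h.exists_eq_append
    have hσ := card_le_length_of_toFinset_eq_univ hu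
    have hv' := hv.mul_card_le_length
    rw [length_append, Nat.succ_mul] at hlen
    have hu' : u.length = Fintype.card α := by omega
    cases i with
    | zero => rwa [zero_mul, drop_zero, take_left' hu']
    | succ i =>
      rw [Nat.succ_mul, add_comm, ← hu', drop_length_add_append, hu']
      exact ih hv (by omega) (by omega)

end Universality

theorem stmt15_general {α : Type u} [Fintype α] [DecidableEq α]
    (hsigma : 2 ≤ Fintype.card α) (w : List α)
    (hlen : w.length = univIdx Finset.univ w * Fintype.card α)
    (s j : ℕ) (hs2 : s ≤ Fintype.card α) :
    ∀ x : ℕ, nextAlphPos w j s = some x →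
      x ≤ j / Fintype.card α * Fintype.card α + Fintype.card α + s := by
  intro x hx
  have : Nonempty α := Fintype.card_pos_iff.1 (by omega)
  have hK := isKUniversal_univIdx Finset.univ_nonempty w
  set p := j / Fintype.card α * Fintype.card α + Fintype.card α with hp
  have hjp : j < p := Nat.lt_div_mul_add (by omega)
  suffices hs : s ≤ ((w.drop j).take (p - j + s)).toFinset.card by
    have := nextAlphPos_le_of_le_card_toFinset_take hs hx
    omega
  rcases lt_or_ge (j / Fintype.card α + 1) (univIdx Finset.univ w) with hk | hk
  · have hB : ((w.drop p).take (Fintype.card α)).toFinset.card = Fintype.card α := by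
      rw [hp, ← Nat.succ_mul, hK.toFinset_take_drop_mul_card_eq_univ hlen hk, Finset.card_univ]
    set B := (w.drop p).take (Fintype.card α)
    have hB_len : B.toFinset.card = B.length :=
      le_antisymm B.toFinset_card_le (hB ▸ length_take_le _ _)
    calc s = (B.take s).toFinset.card := by
          rw [card_toFinset_take_of_card_toFinset_eq_length hB_len, ← hB_len, hB,
            min_eq_left hs2]
      _ = ((w.drop p).take s).toFinset.card := by rw [take_take, min_eq_left hs2]
      _ ≤ _ := card_toFinset_take_drop_le hjp.le s
  · have hshort : (w.drop j).length ≤ p - j + s := by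
      rw [length_drop, hlen]
      have := Nat.mul_le_mul_right (Fintype.card α) hk
      rw [Nat.succ_mul] at this
      omega
    rw [take_of_length_le hshort]
    exact le_card_of_nextAlphPos_eq_some hx

theorem stmt15 {α : Type u} [Fintype α] [DecidableEq α]
    (hsigma : 2 ≤ Fintype.card α) (w : List α) (halph : ∀ a : α, a ∈ w)
    (hlen : w.length = univIdx Finset.univ w * Fintype.card α)
    (s j : ℕ) (hs1 : 1 ≤ s) (hs2 : s ≤ Fintype.card α)
    (hj1 : 1 ≤ j) (hj2 : j ≤ w.length) :
    ∀ x : ℕ, nextAlphPos w j s = some x →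
      x ≤ j / Fintype.card α * Fintype.card α + Fintype.card α + s :=
  stmt15_general hsigma w hlen s j hs2
end
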